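/- Let n ≥ 2 be an integer. Suppose that for every n×n doubly nonnegative matrix A and every u > 0, the matrix A^{n−1}(A + u I)^{−1} is doubly nonnegative. Then for every real α ≥ n − 2 and every n×n doubly nonnegative matrix A, the matrix power A^α (defined by the functional calculus) is doubly nonnegative. -/

import Mathlib

open Matrix Filter Set Topology

/-- Functional calculus for real symmetric matrices: apply `f` to the eigenvalues
in a spectral decomposition `A = U D Uᵀ`. -/
noncomputable def matFun {n : ℕ} (f : ℝ → ℝ) (A : Matrix (Fin n) (Fin n) ℝ) :
    Matrix (Fin n) (Fin n) ℝ :=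
  if hA : A.IsHermitian then
    (hA.eigenvectorUnitary : Matrix (Fin n) (Fin n) ℝ) *
      Matrix.diagonal (fun i => f (hA.eigenvalues i)) *
      (hA.eigenvectorUnitary : Matrix (Fin n) (Fin n) ℝ)ᴴ
  else 0

/-- A real matrix is doubly nonnegative if it is (symmetric) positive semidefinite
with all entries nonnegative. -/
def DN {n : ℕ} (A : Matrix (Fin n) (Fin n) ℝ) : Prop :=
  A.PosSemidef ∧ ∀ i j, 0 ≤ A i j


/-!
For `0 < p < 1`, `x ^ p` is a positive mixture of the functions `t ^ (p - 1) * x / (t + x)`,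
`t > 0` (`Real.exists_measure_rpow_eq_integral_rpowIntegrand₀₁`). So for `m : ℕ`, each entry of
`A ^ (m + p)` is an integral, against a positive measure, of `t ^ (p - 1)` times the corresponding
entry of `A ^ (m + 1) * (A + t • 1)⁻¹`, and is nonnegative as soon as these matrices are.
Taking `m = n - 2 + k` covers every `α ≥ n - 2` that is not an integer, since
`A ^ (m + 1) * (A + t • 1)⁻¹ = A ^ k * (A ^ (n - 1) * (A + t • 1)⁻¹)` is a product of
entrywise nonnegative matrices; integer exponents are ordinary powers of `A`.
-/

open MeasureTheory
open scoped MatrixOrder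

lemma Real.sum_mul_rpow_natCast_add_nonneg {ι : Type*} [Fintype ι] {p : ℝ} (hp : p ∈ Ioo 0 1)
    (m : ℕ) {w x : ι → ℝ} (hx : ∀ k, 0 ≤ x k)
    (h : ∀ t > 0, 0 ≤ ∑ k, w k * (x k ^ (m + 1) * (x k + t)⁻¹)) :
    0 ≤ ∑ k, w k * x k ^ ((m : ℝ) + p) := by
  obtain ⟨μ, hμ⟩ := Real.exists_measure_rpow_eq_integral_rpowIntegrand₀₁ hp
  have hsplit : ∀ k, w k * x k ^ ((m : ℝ) + p) =
      ∫ t in Ioi 0, w k * x k ^ m * Real.rpowIntegrand₀₁ p t (x k) ∂μ := by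
    intro k
    rw [integral_const_mul, ← (hμ (x k) (hx k)).2, Real.rpow_add' (hx k) (by linarith [hp.1]),
      Real.rpow_natCast, mul_assoc]
  rw [Finset.sum_congr rfl fun k _ => hsplit k,
    ← integral_finsetSum _ fun k _ => (hμ (x k) (hx k)).1.const_mul _]
  refine setIntegral_nonneg measurableSet_Ioi fun t (ht : 0 < t) => ?_
  have hfactor : ∑ k, w k * x k ^ m * Real.rpowIntegrand₀₁ p t (x k) =
      t ^ (p - 1) * ∑ k, w k * (x k ^ (m + 1) * (x k + t)⁻¹) := by
    rw [Finset.mul_sum]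
    refine Finset.sum_congr rfl fun k _ => ?_
    rw [Real.rpowIntegrand₀₁_eq_pow_div hp ht.le (hx k)]
    ring
  rw [hfactor]
  exact mul_nonneg (by positivity) (h t ht)

namespace Matrix

variable {ι : Type*} [Fintype ι] [DecidableEq ι] {A : Matrix ι ι ℝ}

lemma IsHermitian.cfc_apply_eq_sum (hA : A.IsHermitian) (f : ℝ → ℝ) (i j : ι) :
    cfc f A i j = ∑ k, hA.eigenvectorUnitary i k * hA.eigenvectorUnitary j k *
      f (hA.eigenvalues k) := by
  rw [hA.cfc_eq, IsHermitian.cfc, Unitary.conjStarAlgAut_apply, mul_apply]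
  simp [mul_diagonal, mul_right_comm]

lemma IsHermitian.cfc_pow_mul_inv_add_const (hA : A.IsHermitian) (m : ℕ) {t : ℝ}
    (ht : -t ∉ spectrum ℝ A) :
    cfc (fun x : ℝ => x ^ m * (x + t)⁻¹) A = A ^ m * (A + t • 1)⁻¹ := by
  have hne : ∀ x ∈ spectrum ℝ A, x + t ≠ 0 := fun x hx hxt =>
    ht (by rwa [← eq_neg_of_add_eq_zero_left hxt])
  rw [cfc_mul (fun x : ℝ => x ^ m) (fun x => (x + t)⁻¹) A (A.finite_spectrum.continuousOn _)
      (A.finite_spectrum.continuousOn _), cfc_pow_id A m, cfc_inv (fun x : ℝ => x + t) A hne,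
    cfc_add_const t (fun x => x) A, cfc_id' ℝ A, Algebra.algebraMap_eq_smul_one,
    nonsing_inv_eq_ringInverse]

lemma PosSemidef.cfc_rpow_natCast_add_apply_nonneg (hA : A.PosSemidef) {m : ℕ}
    (hm : ∀ t : ℝ, 0 < t → ∀ i j, 0 ≤ (A ^ (m + 1) * (A + t • 1)⁻¹) i j)
    {p : ℝ} (hp : p ∈ Ioo 0 1) (i j : ι) :
    0 ≤ cfc (fun x : ℝ => x ^ ((m : ℝ) + p)) A i j := by
  have hspec := (posSemidef_iff_isHermitian_and_spectrum_nonneg.1 hA).2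
  rw [hA.isHermitian.cfc_apply_eq_sum]
  refine Real.sum_mul_rpow_natCast_add_nonneg hp m hA.eigenvalues_nonneg fun t ht => ?_
  have hnot : -t ∉ spectrum ℝ A := fun h => (neg_neg_of_pos ht).not_ge (hspec h)
  simpa only [← hA.isHermitian.cfc_pow_mul_inv_add_const _ hnot,
    hA.isHermitian.cfc_apply_eq_sum] using hm t ht i j

lemma PosSemidef.cfc_rpow_apply_nonneg (hA : A.PosSemidef) (hA₀ : ∀ i j, 0 ≤ A i j) {m : ℕ}
    (hm : ∀ t : ℝ, 0 < t → ∀ i j, 0 ≤ (A ^ (m + 1) * (A + t • 1)⁻¹) i j)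
    {α : ℝ} (hα : m ≤ α) (i j : ι) : 0 ≤ cfc (fun x : ℝ => x ^ α) A i j := by
  obtain ⟨k, p, hp, rfl⟩ :
      ∃ k : ℕ, ∃ p ∈ Ico (0 : ℝ) 1, α = ((m + k : ℕ) : ℝ) + p := by
    refine ⟨⌊α - m⌋₊, α - m - ⌊α - m⌋₊, ⟨?_, ?_⟩, by push_cast; ring⟩
    · linarith [Nat.floor_le (sub_nonneg.2 hα)]
    · linarith [Nat.lt_floor_add_one (α - m)]
  have hmk : ∀ t : ℝ, 0 < t → ∀ i j, 0 ≤ (A ^ (m + k + 1) * (A + t • 1)⁻¹) i j := by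
    intro t ht i j
    rw [show m + k + 1 = k + (m + 1) by ring, pow_add, Matrix.mul_assoc, mul_apply]
    exact Finset.sum_nonneg fun l _ => mul_nonneg (pow_apply_nonneg hA₀ k i l) (hm t ht l j)
  rcases hp.1.eq_or_lt with rfl | hp₀
  · simp_rw [add_zero, Real.rpow_natCast]
    rw [cfc_pow_id A]
    exact pow_apply_nonneg hA₀ _ i j
  · exact hA.cfc_rpow_natCast_add_apply_nonneg hmk ⟨hp₀, hp.2⟩ i j

end Matrix

lemma matFun_eq_cfc {n : ℕ} {A : Matrix (Fin n) (Fin n) ℝ} (hA : A.IsHermitian)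
    (f : ℝ → ℝ) :
    matFun f A = cfc f A := by
  rw [hA.cfc_eq, Matrix.IsHermitian.cfc, Unitary.conjStarAlgAut_apply, matFun, dif_pos hA]
  rfl

theorem stmt_11 (n : ℕ) (hn : 2 ≤ n)
    (H : ∀ A : Matrix (Fin n) (Fin n) ℝ, DN A → ∀ u : ℝ, 0 < u →
      DN (A ^ (n - 1) * (A + u • (1 : Matrix (Fin n) (Fin n) ℝ))⁻¹))
    (α : ℝ) (hα : (n : ℝ) - 2 ≤ α)
    (A : Matrix (Fin n) (Fin n) ℝ) (hA : DN A) :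
    DN (matFun (fun x => x ^ α) A) := by
  obtain ⟨hPSD, hA₀⟩ := hA
  have hspec := (posSemidef_iff_isHermitian_and_spectrum_nonneg.1 hPSD).2
  rw [matFun_eq_cfc hPSD.isHermitian]
  have hm : ((n - 2 : ℕ) : ℝ) ≤ α := by push_cast [Nat.cast_sub hn]; linarith
  refine ⟨nonneg_iff_posSemidef.1 (cfc_nonneg fun x hx => Real.rpow_nonneg (hspec hx) α),
    hPSD.cfc_rpow_apply_nonneg hA₀ (fun t ht => ?_) hm⟩
  rw [show n - 2 + 1 = n - 1 by omega]
  exact (H A ⟨hPSD, hA₀⟩ t ht).2
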